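/- arXiv:1204.3213 — 2 statements merged into one kernel-verified Lean document; each statement's English description precedes it below -/
import Mathlib

section
/- Let 1/2 < γ ≤ 1, c > 0, and set γ_k := c k^{−γ} and s_n := ∑_{k=1}^n γ_k. Then for every x > 0 with c x < 1, there exists a constant κ₁ ∈ (0, 1] such that for all n ≥ 1, κ₁ exp(−s_n x) ≤ ∏_{k=1}^n (1 − γ_k x) ≤ exp(−s_n x). -/
/-!
Since `1 - t ≤ exp (-t)` and, for `t ≤ t₀ < 1`, `log (1 - t) ≥ -t / (1 - t) ≥ -t - t² / (1 - t₀)`,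
the product `∏ (1 - tₖ)` lies between `exp (-∑ tₖ)` and `exp (-∑ tₖ - ∑ tₖ² / (1 - t₀))`.
With `tₖ = c k^{-γ} x ≤ c x` and `γ > 1/2`, the squares `tₖ²` are summable, so the correction
factor is bounded below by a constant independent of `n`.
-/

open Finset Real

theorem Real.exp_neg_add_sq_div_le_one_sub {t t₀ : ℝ} (ht : t ≤ t₀) (ht₀ : t₀ < 1) :
    exp (-(t + t ^ 2 / (1 - t₀))) ≤ 1 - t := by
  have h1t : 0 < 1 - t := by linarith
  have hsq : t ^ 2 / (1 - t) ≤ t ^ 2 / (1 - t₀) := by gcongr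
  have hlog : 1 - (1 - t)⁻¹ = -(t + t ^ 2 / (1 - t)) := by field_simp; ring
  calc exp (-(t + t ^ 2 / (1 - t₀))) ≤ exp (1 - (1 - t)⁻¹) := exp_le_exp.2 (by linarith)
    _ ≤ exp (log (1 - t)) := exp_le_exp.2 (one_sub_inv_le_log_of_pos h1t)
    _ = 1 - t := exp_log h1t

theorem Finset.prod_one_sub_le_exp_neg_sum {ι : Type*} (s : Finset ι) (t : ι → ℝ)
    (ht : ∀ i ∈ s, t i ≤ 1) : ∏ i ∈ s, (1 - t i) ≤ exp (-∑ i ∈ s, t i) := by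
  rw [← sum_neg_distrib, exp_sum]
  exact prod_le_prod (fun i hi => sub_nonneg.2 (ht i hi))
    fun i _ => by linarith [add_one_le_exp (-t i)]

theorem Finset.exp_neg_sum_add_sum_sq_div_le_prod_one_sub {ι : Type*} (s : Finset ι)
    (t : ι → ℝ) {t₀ : ℝ} (ht : ∀ i ∈ s, t i ≤ t₀) (ht₀ : t₀ < 1) :
    exp (-(∑ i ∈ s, t i + (∑ i ∈ s, t i ^ 2) / (1 - t₀))) ≤ ∏ i ∈ s, (1 - t i) := by
  calc exp (-(∑ i ∈ s, t i + (∑ i ∈ s, t i ^ 2) / (1 - t₀)))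
      = ∏ i ∈ s, exp (-(t i + t i ^ 2 / (1 - t₀))) := by
        rw [← exp_sum, sum_neg_distrib, sum_add_distrib, sum_div]
    _ ≤ ∏ i ∈ s, (1 - t i) :=
        prod_le_prod (fun _ _ => (exp_pos _).le)
          fun i hi => exp_neg_add_sq_div_le_one_sub (ht i hi) ht₀

theorem Real.summable_sq_nat_rpow_neg {γ : ℝ} (hγ : 1 / 2 < γ) :
    Summable fun k : ℕ => ((k : ℝ) ^ (-γ)) ^ 2 :=
  (summable_nat_rpow.2 (by push_cast; linarith : -γ * ((2 : ℕ) : ℝ) < -1)).congr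
    fun k => rpow_mul_natCast k.cast_nonneg (-γ) 2

theorem prod_one_sub_step_mul_comparable_exp_general
    (γ c : ℝ) (hγ0 : 1 / 2 < γ) (hc : 0 < c)
    (x : ℝ) (hx : 0 < x) (hcx : c * x < 1) :
    ∃ κ₁ : ℝ, 0 < κ₁ ∧ κ₁ ≤ 1 ∧ ∀ n : ℕ, 1 ≤ n →
      κ₁ * Real.exp (-((∑ k ∈ Finset.Icc 1 n, c * (k : ℝ) ^ (-γ)) * x)) ≤
          ∏ k ∈ Finset.Icc 1 n, (1 - c * (k : ℝ) ^ (-γ) * x) ∧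
      ∏ k ∈ Finset.Icc 1 n, (1 - c * (k : ℝ) ^ (-γ) * x) ≤
          Real.exp (-((∑ k ∈ Finset.Icc 1 n, c * (k : ℝ) ^ (-γ)) * x)) := by
  set T := ∑' k : ℕ, ((k : ℝ) ^ (-γ)) ^ 2
  have hT : 0 ≤ T := tsum_nonneg fun k => sq_nonneg _
  refine ⟨exp (-((c * x) ^ 2 * T / (1 - c * x))), exp_pos _,
    exp_le_one_iff.2 (neg_nonpos.2 (by positivity)), fun n _ => ?_⟩
  set t : ℕ → ℝ := fun k => c * (k : ℝ) ^ (-γ) * x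
  have ht : ∀ k ∈ Icc 1 n, t k ≤ c * x := fun k hk => by
    have hk : (1 : ℝ) ≤ k := by exact_mod_cast (mem_Icc.1 hk).1
    have hpow := rpow_le_one_of_one_le_of_nonpos hk (by linarith : -γ ≤ 0)
    simp only [t, mul_right_comm c]
    exact mul_le_of_le_one_right (by positivity) hpow
  have hsq : ∑ k ∈ Icc 1 n, t k ^ 2 ≤ (c * x) ^ 2 * T := by
    simp only [t, mul_right_comm c _ x, mul_pow, ← mul_sum]
    exact mul_le_mul_of_nonneg_left
      ((summable_sq_nat_rpow_neg hγ0).sum_le_tsum _ fun _ _ => sq_nonneg _) (by positivity)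
  rw [sum_mul]
  refine ⟨?_, prod_one_sub_le_exp_neg_sum _ t fun k hk => (ht k hk).trans hcx.le⟩
  calc exp (-((c * x) ^ 2 * T / (1 - c * x))) * exp (-∑ k ∈ Icc 1 n, t k)
      ≤ exp (-(∑ k ∈ Icc 1 n, t k + (∑ k ∈ Icc 1 n, t k ^ 2) / (1 - c * x))) := by
        have hcorr : (∑ k ∈ Icc 1 n, t k ^ 2) / (1 - c * x) ≤ (c * x) ^ 2 * T / (1 - c * x) := by
          gcongr
        rw [← exp_add]
        gcongr
        linarith
    _ ≤ ∏ k ∈ Icc 1 n, (1 - t k) := exp_neg_sum_add_sum_sq_div_le_prod_one_sub _ t ht hcx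

/-- For step sizes `γ_k = c k^{−γ}` with `1/2 < γ ≤ 1`, `c > 0`, and any `x > 0` with
`c x < 1`, the products `∏_{k=1}^n (1 − γ_k x)` are comparable to `exp(−s_n x)`, where
`s_n = ∑_{k=1}^n γ_k`: there is `κ₁ ∈ (0,1]` with
`κ₁ exp(−s_n x) ≤ ∏_{k=1}^n (1 − γ_k x) ≤ exp(−s_n x)` for all `n ≥ 1`. -/
theorem prod_one_sub_step_mul_comparable_exp
    (γ c : ℝ) (hγ0 : 1 / 2 < γ) (hγ1 : γ ≤ 1) (hc : 0 < c)
    (x : ℝ) (hx : 0 < x) (hcx : c * x < 1) :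
    ∃ κ₁ : ℝ, 0 < κ₁ ∧ κ₁ ≤ 1 ∧ ∀ n : ℕ, 1 ≤ n →
      κ₁ * Real.exp (-((∑ k ∈ Finset.Icc 1 n, c * (k : ℝ) ^ (-γ)) * x)) ≤
          ∏ k ∈ Finset.Icc 1 n, (1 - c * (k : ℝ) ^ (-γ) * x) ∧
      ∏ k ∈ Finset.Icc 1 n, (1 - c * (k : ℝ) ^ (-γ) * x) ≤
          Real.exp (-((∑ k ∈ Finset.Icc 1 n, c * (k : ℝ) ^ (-γ)) * x)) :=
  prod_one_sub_step_mul_comparable_exp_general γ c hγ0 hc x hx hcx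
end

section
/- Let H be a separable real Hilbert space, m ∈ H, and let μ, ν be probability measures on H with ∫ ‖y − m‖^{−2} dμ(y) ≤ C and ∫ ‖y' − m‖^{−2} dν(y') ≤ C for some C > 0. Let π be a probability measure on H × H whose marginals are μ and ν. For w ∈ H let T_w(u) = ⟨w, u⟩ w. Then the Bochner integrals (in the Banach space of continuous linear operators on H) of the rank-one operators satisfy ‖∫ T_{D(m,y)} dμ(y) − ∫ T_{D(m,y')} dν(y')‖ ≤ 4 √C · √(∫ ‖y − y'‖² dπ(y,y')). -/
open MeasureTheory
open scoped Classical ENNReal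

/-- The unit vector "starting" from `a` in the direction of `b`. -/
noncomputable def unitDir {H : Type*} [NormedAddCommGroup H] [InnerProductSpace ℝ H]
    (a b : H) : H :=
  if b = a then 0 else ‖b - a‖⁻¹ • (b - a)

/-- The rank-one operator `T_w : u ↦ ⟨w, u⟩ w`. -/
noncomputable def rankOne {H : Type*} [NormedAddCommGroup H] [InnerProductSpace ℝ H]
    (w : H) : H →L[ℝ] H :=
  (innerSL ℝ w).smulRight w


/-! Since `unitDir m y = normalize (y - m)`, the elementary bound
`‖x‖ * ‖normalize x - normalize y‖ ≤ 2 * ‖x - y‖` together with the fact that `w ↦ T_w` is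
`2`-Lipschitz on the unit ball gives `‖T_{D(m,y)} - T_{D(m,y')}‖ ≤ 4 ‖y - y'‖ / ‖y - m‖`.
Writing both integrals as integrals against the coupling `π` bounds their difference by
`4 ∫ ‖y - y'‖ / ‖y - m‖ dπ`, and Cauchy–Schwarz splits this into the transport cost and the
inverse second moment of `μ`. -/

namespace NormedSpace

variable {V : Type*} [NormedAddCommGroup V] [NormedSpace ℝ V]

lemma norm_normalize_le (x : V) : ‖normalize x‖ ≤ 1 := by
  rcases eq_or_ne x 0 with rfl | hx
  · simp
  · exact (norm_normalize hx).le

lemma norm_mul_norm_normalize_sub_le (x y : V) :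
    ‖x‖ * ‖normalize x - normalize y‖ ≤ 2 * ‖x - y‖ := by
  have key : ‖x‖ • (normalize x - normalize y) = (x - y) + (‖y‖ - ‖x‖) • normalize y := by
    rw [smul_sub, norm_smul_normalize, sub_smul, norm_smul_normalize]
    abel
  have h := congrArg norm key
  rw [norm_smul, norm_norm] at h
  calc ‖x‖ * ‖normalize x - normalize y‖
      ≤ ‖x - y‖ + |‖y‖ - ‖x‖| * ‖normalize y‖ := by
        rw [h, ← Real.norm_eq_abs, ← norm_smul]; exact norm_add_le _ _
    _ ≤ ‖x - y‖ + ‖x - y‖ * 1 := by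
        gcongr
        · rw [abs_sub_comm]; exact abs_norm_sub_norm_le x y
        · exact norm_normalize_le y
    _ = 2 * ‖x - y‖ := by ring

lemma measurable_normalize [MeasurableSpace V] [BorelSpace V] [SecondCountableTopology V] :
    Measurable (normalize : V → V) :=
  measurable_norm.inv.smul measurable_id

end NormedSpace

open NormedSpace

section RankOne

variable {H : Type*} [NormedAddCommGroup H] [InnerProductSpace ℝ H]

lemma unitDir_eq_normalize (a b : H) : unitDir a b = normalize (b - a) := by
  unfold unitDir NormedSpace.normalize
  split_ifs with h <;> simp [h]

lemma continuous_rankOne : Continuous (rankOne : H → H →L[ℝ] H) := by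
  unfold rankOne
  fun_prop

lemma norm_rankOne (w : H) : ‖rankOne w‖ = ‖w‖ * ‖w‖ :=
  InnerProductSpace.norm_rankOne w w

lemma norm_rankOne_sub_rankOne_le (v w : H) :
    ‖rankOne v - rankOne w‖ ≤ (‖v‖ + ‖w‖) * ‖v - w‖ := by
  have key : rankOne v - rankOne w =
      InnerProductSpace.rankOne ℝ (v - w) v + InnerProductSpace.rankOne ℝ w (v - w) := by
    simp only [rankOne, ← InnerProductSpace.rankOne_def, map_sub, sub_apply]
    abel
  calc ‖rankOne v - rankOne w‖ ≤ ‖v - w‖ * ‖v‖ + ‖w‖ * ‖v - w‖ := by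
        rw [key]
        exact (norm_add_le _ _).trans_eq (by simp only [InnerProductSpace.norm_rankOne])
    _ = (‖v‖ + ‖w‖) * ‖v - w‖ := by ring

lemma norm_mul_norm_rankOne_normalize_sub_le (x y : H) :
    ‖x‖ * ‖rankOne (normalize x) - rankOne (normalize y)‖ ≤ 4 * ‖x - y‖ := by
  calc ‖x‖ * ‖rankOne (normalize x) - rankOne (normalize y)‖
      ≤ ‖x‖ * ((1 + 1) * ‖normalize x - normalize y‖) := by
        gcongr
        refine (norm_rankOne_sub_rankOne_le _ _).trans ?_
        gcongr <;> exact norm_normalize_le _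
    _ = 2 * (‖x‖ * ‖normalize x - normalize y‖) := by ring
    _ ≤ 2 * (2 * ‖x - y‖) :=
        mul_le_mul_of_nonneg_left (norm_mul_norm_normalize_sub_le x y) zero_le_two
    _ = 4 * ‖x - y‖ := by ring

lemma enorm_rankOne_normalize_sub_le (x y : H) :
    ‖rankOne (normalize x) - rankOne (normalize y)‖ₑ ≤ 4 * ‖x - y‖ₑ / ‖x‖ₑ := by
  rcases eq_or_ne x 0 with rfl | hx
  · rcases eq_or_ne y 0 with rfl | hy
    · simp [← ofReal_norm]
    · simp [ENNReal.div_zero, hy]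
  rw [ENNReal.le_div_iff_mul_le (Or.inl (enorm_ne_zero.2 hx)) (Or.inl enorm_ne_top),
    mul_comm, ← ofReal_norm, ← ofReal_norm, ← ofReal_norm,
    ← ENNReal.ofReal_mul (norm_nonneg _), ← ENNReal.ofReal_ofNat 4,
    ← ENNReal.ofReal_mul (by norm_num)]
  exact ENNReal.ofReal_le_ofReal (norm_mul_norm_rankOne_normalize_sub_le x y)

lemma enorm_rankOne_unitDir_sub_le (m y y' : H) :
    ‖rankOne (unitDir m y) - rankOne (unitDir m y')‖ₑ ≤ 4 * ‖y - y'‖ₑ / ‖y - m‖ₑ := by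
  simpa only [unitDir_eq_normalize, sub_sub_sub_cancel_right] using
    enorm_rankOne_normalize_sub_le (y - m) (y' - m)

variable [MeasurableSpace H] [BorelSpace H] [SecondCountableTopology H]

lemma integrable_rankOne_unitDir (m : H) (ρ : Measure H) [IsFiniteMeasure ρ] :
    Integrable (fun y => rankOne (unitDir m y)) ρ := by
  refine .of_bound (C := 1) ?_ (ae_of_all _ fun y => ?_)
  · simp only [unitDir_eq_normalize]
    exact continuous_rankOne.comp_aestronglyMeasurable
      (measurable_normalize.comp (measurable_sub_const m)).aestronglyMeasurable
  · rw [unitDir_eq_normalize, norm_rankOne]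
    exact mul_le_one₀ (norm_normalize_le _) (norm_nonneg _) (norm_normalize_le _)

end RankOne

lemma enorm_integral_map_fst_sub_integral_map_snd_le {α E : Type*} [MeasurableSpace α]
    [NormedAddCommGroup E] [NormedSpace ℝ E] {π : Measure (α × α)} {g : α → E}
    (h₁ : Integrable g (π.map Prod.fst)) (h₂ : Integrable g (π.map Prod.snd)) :
    ‖∫ x, g x ∂π.map Prod.fst - ∫ x, g x ∂π.map Prod.snd‖ₑ ≤ ∫⁻ z, ‖g z.1 - g z.2‖ₑ ∂π := by
  have h₁' : Integrable (fun z => g z.1) π := h₁.comp_measurable measurable_fst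
  have h₂' : Integrable (fun z => g z.2) π := h₂.comp_measurable measurable_snd
  calc ‖∫ x, g x ∂π.map Prod.fst - ∫ x, g x ∂π.map Prod.snd‖ₑ
      = ‖∫ z, (g z.1 - g z.2) ∂π‖ₑ := by
        rw [integral_map measurable_fst.aemeasurable h₁.1,
          integral_map measurable_snd.aemeasurable h₂.1, integral_sub h₁' h₂']
    _ ≤ ∫⁻ z, ‖g z.1 - g z.2‖ₑ ∂π := enorm_integral_le_lintegral_enorm _

lemma ENNReal.lintegral_mul_le_L2_mul_L2 {α : Type*} [MeasurableSpace α] (μ : Measure α)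
    {f g : α → ℝ≥0∞} (hf : AEMeasurable f μ) (hg : AEMeasurable g μ) :
    ∫⁻ a, f a * g a ∂μ ≤ (∫⁻ a, f a ^ 2 ∂μ) ^ (1 / 2 : ℝ) * (∫⁻ a, g a ^ 2 ∂μ) ^ (1 / 2 : ℝ) := by
  simpa only [ENNReal.rpow_two, Pi.mul_apply] using
    ENNReal.lintegral_mul_le_Lp_mul_Lq μ Real.HolderConjugate.two_two hf hg

lemma ENNReal.ofReal_sqrt (x : ℝ) : ENNReal.ofReal √x = ENNReal.ofReal x ^ (1 / 2 : ℝ) := by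
  rcases le_total 0 x with hx | hx
  · rw [Real.sqrt_eq_rpow, ENNReal.ofReal_rpow_of_nonneg hx (by norm_num)]
  · simp [Real.sqrt_eq_zero_of_nonpos hx, ENNReal.ofReal_of_nonpos hx]

theorem norm_integral_rankOne_unitDir_sub_le_general
    {H : Type*} [NormedAddCommGroup H] [InnerProductSpace ℝ H]
    [MeasurableSpace H] [BorelSpace H] [SecondCountableTopology H]
    (m : H) (C : ℝ)
    (μ ν : Measure H)
    (hμm : ∫⁻ y, ((ENNReal.ofReal ‖y - m‖) ^ 2)⁻¹ ∂μ ≤ ENNReal.ofReal C)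
    (π : Measure (H × H)) [IsProbabilityMeasure π]
    (hπ1 : π.map Prod.fst = μ) (hπ2 : π.map Prod.snd = ν) :
    ENNReal.ofReal ‖(∫ y, rankOne (unitDir m y) ∂μ) - ∫ y', rankOne (unitDir m y') ∂ν‖ ≤
      ENNReal.ofReal (4 * Real.sqrt C) *
        (∫⁻ z, ENNReal.ofReal (‖z.1 - z.2‖ ^ 2) ∂π) ^ (1/2 : ℝ) := by
  subst hπ1 hπ2
  have hq : ∫⁻ z, ‖z.1 - m‖ₑ⁻¹ ^ 2 ∂π ≤ ENNReal.ofReal C := by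
    rw [lintegral_map (by fun_prop) measurable_fst] at hμm
    simpa only [ofReal_norm, ENNReal.inv_pow] using hμm
  simp only [ofReal_norm, ENNReal.ofReal_pow (norm_nonneg _), ENNReal.ofReal_mul zero_le_four,
    ENNReal.ofReal_sqrt, ENNReal.ofReal_ofNat]
  calc ‖∫ y, rankOne (unitDir m y) ∂π.map Prod.fst - ∫ y, rankOne (unitDir m y) ∂π.map Prod.snd‖ₑ
      ≤ ∫⁻ z, ‖rankOne (unitDir m z.1) - rankOne (unitDir m z.2)‖ₑ ∂π :=
        enorm_integral_map_fst_sub_integral_map_snd_le (integrable_rankOne_unitDir m _)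
          (integrable_rankOne_unitDir m _)
    _ ≤ ∫⁻ z, 4 * (‖z.1 - z.2‖ₑ * ‖z.1 - m‖ₑ⁻¹) ∂π :=
        lintegral_mono fun z => (enorm_rankOne_unitDir_sub_le m z.1 z.2).trans_eq (mul_div_assoc ..)
    _ = 4 * ∫⁻ z, ‖z.1 - z.2‖ₑ * ‖z.1 - m‖ₑ⁻¹ ∂π := lintegral_const_mul' _ _ ENNReal.ofNat_ne_top
    _ ≤ 4 * ((∫⁻ z, ‖z.1 - z.2‖ₑ ^ 2 ∂π) ^ (1 / 2 : ℝ) * ENNReal.ofReal C ^ (1 / 2 : ℝ)) := by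
        grw [ENNReal.lintegral_mul_le_L2_mul_L2 π (by fun_prop) (by fun_prop), hq]
    _ = 4 * ENNReal.ofReal C ^ (1 / 2 : ℝ) * (∫⁻ z, ‖z.1 - z.2‖ₑ ^ 2 ∂π) ^ (1 / 2 : ℝ) := by ring

/-- If `μ, ν` are probability measures on a separable real Hilbert space whose inverse
second moments about `m` are bounded by `C`, and `π` is a coupling of `μ` and `ν`, then
the Bochner integrals of the rank-one operators `T_{D(m,·)}` satisfy
`‖∫ T_{D(m,y)} dμ(y) − ∫ T_{D(m,y')} dν(y')‖ ≤ 4 √C √(∫ ‖y − y'‖² dπ)`. -/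
theorem norm_integral_rankOne_unitDir_sub_le
    {H : Type*} [NormedAddCommGroup H] [InnerProductSpace ℝ H] [CompleteSpace H]
    [MeasurableSpace H] [BorelSpace H] [SecondCountableTopology H]
    (m : H) (C : ℝ) (hC : 0 < C)
    (μ ν : Measure H) [IsProbabilityMeasure μ] [IsProbabilityMeasure ν]
    (hμm : ∫⁻ y, ((ENNReal.ofReal ‖y - m‖) ^ 2)⁻¹ ∂μ ≤ ENNReal.ofReal C)
    (hνm : ∫⁻ y', ((ENNReal.ofReal ‖y' - m‖) ^ 2)⁻¹ ∂ν ≤ ENNReal.ofReal C)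
    (π : Measure (H × H)) [IsProbabilityMeasure π]
    (hπ1 : π.map Prod.fst = μ) (hπ2 : π.map Prod.snd = ν) :
    ENNReal.ofReal ‖(∫ y, rankOne (unitDir m y) ∂μ) - ∫ y', rankOne (unitDir m y') ∂ν‖ ≤
      ENNReal.ofReal (4 * Real.sqrt C) *
        (∫⁻ z, ENNReal.ofReal (‖z.1 - z.2‖ ^ 2) ∂π) ^ (1/2 : ℝ) :=
  norm_integral_rankOne_unitDir_sub_le_general m C μ ν hμm π hπ1 hπ2
end
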